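/- Let P be a DPAG that contains a directed mixed graph G, and let i ≠ j be two nodes with a directed edge i → j in P. If there does not exist a possibly directed path from i to j in P that avoids the edge i → j, then the directed edge i → j is present in G. -/
import Mathlib


namespace CausalGraphs

variable {V : Type*}

/-- A directed mixed graph (DMG): directed edges `dir` (`i → j`) and
bidirected edges `bi` (`i ↔ j`), with no self-loops. -/
structure DMG (V : Type*) where
  dir : V → V → Prop
  bi : V → V → Prop
  dir_irrefl : ∀ i, ¬ dir i i
  bi_irrefl : ∀ i, ¬ bi i i

namespace DMG

/-- `G.Anc i j`: `i ∈ an(G, j)`, i.e. there is a (possibly trivial) directed path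
from `i` to `j` in `G`. -/
def Anc (G : DMG V) (i j : V) : Prop :=
  Relation.ReflTransGen G.dir i j

/-- `G.Scc i j`: `i ∈ scc(G, j)`, i.e. `i` and `j` lie in the same strongly
connected component of `G`. -/
def Scc (G : DMG V) (i j : V) : Prop :=
  G.Anc i j ∧ G.Anc j i

/-- There is a bidirected edge between `i` and `j` (bidirected edges are unordered). -/
def BiEdge (G : DMG V) (i j : V) : Prop :=
  G.bi i j ∨ G.bi j i

/-- `G` has no directed cycle (i.e. `G` is an ADMG). -/
def Acyclic (G : DMG V) : Prop :=
  ∀ i j, G.dir i j → ¬ G.Anc j i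

end DMG

/-- A walk of length `len` is recorded by its vertices `vert 0, …, vert len` and,
for each edge index `k < len`, the edge marks: `intoL k` (resp. `intoR k`) is `true`
iff the `k`-th edge has an arrowhead at `vert k` (resp. at `vert (k+1)`). -/
structure Walk (V : Type*) where
  len : ℕ
  vert : ℕ → V
  intoL : ℕ → Bool
  intoR : ℕ → Bool

namespace Walk

def first (w : Walk V) : V := w.vert 0

def last (w : Walk V) : V := w.vert w.len

/-- The walk is an actual walk in a DMG `G`: each step traverses a directed edge
(in either direction) or a bidirected edge of `G`, with the corresponding marks. -/
def ValidOn (G : DMG V) (w : Walk V) : Prop :=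
  ∀ k, k < w.len →
    (w.intoL k = false ∧ w.intoR k = true ∧ G.dir (w.vert k) (w.vert (k+1))) ∨
    (w.intoL k = true ∧ w.intoR k = false ∧ G.dir (w.vert (k+1)) (w.vert k)) ∨
    (w.intoL k = true ∧ w.intoR k = true ∧ G.BiEdge (w.vert k) (w.vert (k+1)))

/-- `k` is a non-endpoint position of the walk. -/
def Interior (w : Walk V) (k : ℕ) : Prop := 0 < k ∧ k < w.len

/-- The non-endpoint node `vert k` is a collider on the walk: both adjacent
edges have an arrowhead at it. -/
def ColliderAt (w : Walk V) (k : ℕ) : Prop :=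
  w.Interior k ∧ w.intoR (k-1) = true ∧ w.intoL k = true

/-- The non-endpoint node `vert k` is a non-collider on the walk. -/
def NonColliderAt (w : Walk V) (k : ℕ) : Prop :=
  w.Interior k ∧ ¬ (w.intoR (k-1) = true ∧ w.intoL k = true)

/-- The edge on the first-endpoint side of position `k` is directed out of
`vert k`, pointing to the neighbour `vert (k-1)` on the walk. -/
def PointsLeft (w : Walk V) (k : ℕ) : Prop :=
  w.intoL (k-1) = true ∧ w.intoR (k-1) = false

/-- The edge on the last-endpoint side of position `k` is directed out of
`vert k`, pointing to the neighbour `vert (k+1)` on the walk. -/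
def PointsRight (w : Walk V) (k : ℕ) : Prop :=
  w.intoL k = false ∧ w.intoR k = true

/-- The walk is a path: all its vertices are distinct. -/
def IsPath (w : Walk V) : Prop :=
  ∀ a, a ≤ w.len → ∀ b, b ≤ w.len → w.vert a = w.vert b → a = b

/-- The walk is into its first node (arrowhead at the first node). -/
def IntoFirst (w : Walk V) : Prop := 0 < w.len ∧ w.intoL 0 = true

/-- The walk is into its last node (arrowhead at the last node). -/
def IntoLast (w : Walk V) : Prop := 0 < w.len ∧ w.intoR (w.len - 1) = true

/-- The walk is σ-blocked by the set `C`. -/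
def SigmaBlocked (G : DMG V) (w : Walk V) (C : Set V) : Prop :=
  w.first ∈ C ∨ w.last ∈ C ∨
  (∃ k, w.ColliderAt k ∧ ¬ ∃ c ∈ C, G.Anc (w.vert k) c) ∨
  (∃ k, w.NonColliderAt k ∧ w.vert k ∈ C ∧
    ((w.PointsLeft k ∧ ¬ G.Scc (w.vert k) (w.vert (k-1))) ∨
     (w.PointsRight k ∧ ¬ G.Scc (w.vert k) (w.vert (k+1)))))

/-- The walk is d-blocked by the set `C`. -/
def DBlocked (G : DMG V) (w : Walk V) (C : Set V) : Prop :=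
  w.first ∈ C ∨ w.last ∈ C ∨
  (∃ k, w.ColliderAt k ∧ ¬ ∃ c ∈ C, G.Anc (w.vert k) c) ∨
  (∃ k, w.NonColliderAt k ∧ w.vert k ∈ C)

/-- The walk is inducing: every collider on it is an ancestor of one of the two
endpoints, and every non-endpoint non-collider only has outgoing directed edges
to its neighbours on the walk that lie in the same strongly connected component. -/
def Inducing (G : DMG V) (w : Walk V) : Prop :=
  (∀ k, w.ColliderAt k → G.Anc (w.vert k) w.first ∨ G.Anc (w.vert k) w.last) ∧
  (∀ k, w.NonColliderAt k →
    (w.PointsLeft k → G.Scc (w.vert k) (w.vert (k-1))) ∧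
    (w.PointsRight k → G.Scc (w.vert k) (w.vert (k+1))))

end Walk

namespace DMG

/-- `A` and `B` are σ-separated given `C` in `G`. -/
def SigmaSep (G : DMG V) (A B C : Set V) : Prop :=
  ∀ w : Walk V, w.ValidOn G → w.first ∈ A → w.last ∈ B → w.SigmaBlocked G C

/-- `A` and `B` are d-separated given `C` in `G`. -/
def DSep (G : DMG V) (A B C : Set V) : Prop :=
  ∀ w : Walk V, w.ValidOn G → w.first ∈ A → w.last ∈ B → w.DBlocked G C

/-- Nodes `i` and `j` are σ-connected given `C` in `G`. -/
def SigmaConnected (G : DMG V) (i j : V) (C : Set V) : Prop :=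
  ∃ w : Walk V, w.ValidOn G ∧ w.first = i ∧ w.last = j ∧ ¬ w.SigmaBlocked G C

/-- The σ-independence model of `G`. -/
def IMsigma (G : DMG V) : Set (Set V × Set V × Set V) :=
  { t | G.SigmaSep t.1 t.2.1 t.2.2 }

/-- The d-independence model of `G`. -/
def IMd (G : DMG V) : Set (Set V × Set V × Set V) :=
  { t | G.DSep t.1 t.2.1 t.2.2 }

/-- There is an inducing walk between `i` and `j` in `G`. -/
def InducingWalk (G : DMG V) (i j : V) : Prop :=
  ∃ w : Walk V, w.ValidOn G ∧ w.first = i ∧ w.last = j ∧ w.Inducing G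

/-- There is an inducing path between `i` and `j` in `G`. -/
def InducingPath (G : DMG V) (i j : V) : Prop :=
  ∃ w : Walk V, w.ValidOn G ∧ w.first = i ∧ w.last = j ∧ w.IsPath ∧ w.Inducing G

/-- There is an inducing walk between `i` and `j` in `G` that is into `j`. -/
def InducingWalkIntoLast (G : DMG V) (i j : V) : Prop :=
  ∃ w : Walk V, w.ValidOn G ∧ w.first = i ∧ w.last = j ∧ w.Inducing G ∧ w.IntoLast

/-- There is an inducing walk between `i` and `j` in `G` that is into both `i` and `j`. -/
def InducingWalkIntoBoth (G : DMG V) (i j : V) : Prop :=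
  ∃ w : Walk V, w.ValidOn G ∧ w.first = i ∧ w.last = j ∧ w.Inducing G ∧ w.IntoFirst ∧ w.IntoLast

/-- `G'` is an acyclification of `G`. -/
def IsAcyclification (G G' : DMG V) : Prop :=
  G'.Acyclic ∧
  (∀ i j, ¬ G.Scc i j →
    ((G'.dir i j ↔ ∃ k, G.Scc k j ∧ G.dir i k) ∧
     (G'.bi i j ↔ ∃ k, G.Scc k j ∧ G.bi i k))) ∧
  (∀ i j, i ≠ j → G.Scc i j → (G'.dir i j ∨ G'.dir j i ∨ G'.bi i j))

end DMG

/-- Edge marks of a partial ancestral graph. -/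
inductive Mark : Type
  | tail
  | arrow
  | circle
deriving DecidableEq

/-- A directed partial ancestral graph (DPAG). `mark i j` is the edge mark at `j`
on the edge between `i` and `j` (only meaningful when `adj i j`). Allowed edge
types are `→`, `←`, `↔`, `∘→`, `←∘` and `∘—∘`; there are no directed and no
almost directed cycles. -/
structure DPAG (V : Type*) where
  adj : V → V → Prop
  mark : V → V → Mark
  adj_symm : ∀ i j, adj i j → adj j i
  adj_irrefl : ∀ i, ¬ adj i i
  tail_imp_arrow : ∀ i j, adj i j → mark j i = Mark.tail → mark i j = Mark.arrow
  no_directed_cycle : ∀ i, ¬ Relation.TransGen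
    (fun a b => adj a b ∧ mark a b = Mark.arrow ∧ mark b a = Mark.tail) i i
  no_almost_directed_cycle : ∀ i j, Relation.ReflTransGen
    (fun a b => adj a b ∧ mark a b = Mark.arrow ∧ mark b a = Mark.tail) i j →
    ¬ (adj i j ∧ mark i j = Mark.arrow ∧ mark j i = Mark.arrow)

/-- A directed edge `i → j` with respect to raw adjacency/mark data. -/
def DirEdgeOn (adj : V → V → Prop) (mark : V → V → Mark) (i j : V) : Prop :=
  adj i j ∧ mark i j = Mark.arrow ∧ mark j i = Mark.tail

/-- The directed edge `i → j` is definitely visible, with respect to raw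
adjacency/mark data: there is a node `k` not adjacent to `j` such that either
the edge between `k` and `i` is into `i`, or there is a path between `k` and `i`
that is into `i` on which every non-endpoint node is a collider and a parent of `j`. -/
def DefinitelyVisibleOn (adj : V → V → Prop) (mark : V → V → Mark) (i j : V) : Prop :=
  DirEdgeOn adj mark i j ∧
  ∃ k, ¬ adj k j ∧
    ((adj k i ∧ mark k i = Mark.arrow) ∨
     (∃ n, ∃ p : ℕ → V, 0 < n ∧ p 0 = k ∧ p n = i ∧
       (∀ a, a ≤ n → ∀ b, b ≤ n → p a = p b → a = b) ∧
       (∀ m, m < n → adj (p m) (p (m+1))) ∧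
       mark (p (n-1)) i = Mark.arrow ∧
       (∀ m, 0 < m → m < n →
         (mark (p (m-1)) (p m) = Mark.arrow ∧ mark (p (m+1)) (p m) = Mark.arrow) ∧
         DirEdgeOn adj mark (p m) j)))

namespace DPAG

/-- `i → j` in `P`. -/
def DirEdge (P : DPAG V) (i j : V) : Prop := DirEdgeOn P.adj P.mark i j

/-- `i ↔ j` in `P`. -/
def BiEdge (P : DPAG V) (i j : V) : Prop :=
  P.adj i j ∧ P.mark i j = Mark.arrow ∧ P.mark j i = Mark.arrow

/-- `i *→ j` in `P`: an edge between `i` and `j` with an arrowhead at `j`. -/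
def ArrowAt (P : DPAG V) (i j : V) : Prop := P.adj i j ∧ P.mark i j = Mark.arrow

/-- The directed edge `i → j` of `P` is definitely visible in `P`. -/
def DefinitelyVisible (P : DPAG V) (i j : V) : Prop :=
  DefinitelyVisibleOn P.adj P.mark i j

/-- The DPAG `P` contains the DMG `G`. -/
def Contains (P : DPAG V) (G : DMG V) : Prop :=
  (∀ i j, i ≠ j → (P.adj i j ↔ G.InducingPath i j)) ∧
  (∀ i j, P.ArrowAt i j → ¬ G.Anc j i) ∧
  (∀ i j, P.DirEdge i j → G.Anc i j)

/-- `p 0, …, p n` is a possibly directed path in `P`: consecutive vertices are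
adjacent, no edge has an arrowhead at the endpoint nearer `p 0`, and all
vertices are distinct. -/
def PossiblyDirectedPathOn (P : DPAG V) (n : ℕ) (p : ℕ → V) : Prop :=
  (∀ k, k < n → P.adj (p k) (p (k+1)) ∧ P.mark (p (k+1)) (p k) ≠ Mark.arrow) ∧
  (∀ a, a ≤ n → ∀ b, b ≤ n → p a = p b → a = b)

/-- The path `p 0, …, p n` is uncovered: every consecutive triple is unshielded. -/
def UncoveredOn (P : DPAG V) (n : ℕ) (p : ℕ → V) : Prop :=
  ∀ k, k + 2 ≤ n → ¬ P.adj (p k) (p (k+2))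

/-- There is a possibly directed path from `i` to `j` in `P`. -/
def PDPath (P : DPAG V) (i j : V) : Prop :=
  ∃ n, ∃ p : ℕ → V, p 0 = i ∧ p n = j ∧ P.PossiblyDirectedPathOn n p

end DPAG

/-- JCI Assumption 1 (exogeneity): no system variable causes any context variable
(`K` is the set of context nodes; its complement is the set of system nodes). -/
def JCI1 (G : DMG V) (K : Set V) : Prop :=
  ∀ i k, i ∉ K → k ∈ K → ¬ G.dir i k

/-- JCI Assumption 2 (randomization): no pair of a system and a context variable
is confounded. -/
def JCI2 (G : DMG V) (K : Set V) : Prop :=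
  ∀ i k, i ∉ K → k ∈ K → ¬ G.BiEdge i k

/-- JCI Assumption 3 (genericity): every pair of distinct context variables is
connected by a bidirected edge and by no directed edge. -/
def JCI3 (G : DMG V) (K : Set V) : Prop :=
  ∀ k k', k ∈ K → k' ∈ K → k ≠ k' → (G.bi k k' ∧ ¬ G.dir k k')

/-- An independence model on `V`: a set of triples of subsets of `V`. -/
abbrev IndepModel (V : Type*) := Set (Set V × Set V × Set V)

/-- Background knowledge `Ψ` is compatible with the acyclification. -/
def CompatibleWithAcyclification (Ψ : DMG V → Prop) : Prop :=
  ∀ G : DMG V, Ψ G →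
    (∃ G', G.IsAcyclification G' ∧ Ψ G') ∧
    (∀ i j : V, G.Anc i j → ∃ G', G.IsAcyclification G' ∧ Ψ G' ∧ G'.Anc i j) ∧
    (∀ i j : V, ¬ G.Anc i j → ∀ G', G.IsAcyclification G' → Ψ G' → ¬ G'.Anc i j)

private lemma chain_of_reflTransGen {r : V → V → Prop} {i j : V}
    (h : Relation.ReflTransGen r i j) :
    ∃ n, ∃ f : ℕ → V, f 0 = i ∧ f n = j ∧ ∀ k, k < n → r (f k) (f (k+1)) := by
  induction h with
  | refl => exact ⟨0, fun _ => i, rfl, rfl, fun k hk => absurd hk (Nat.not_lt_zero k)⟩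
  | @tail b c _ hbc ih =>
    obtain ⟨n, f, h0, hn, hstep⟩ := ih
    refine ⟨n+1, fun m => if m ≤ n then f m else c, by simp [h0], by simp, ?_⟩
    intro k hk
    rcases Nat.lt_or_ge k n with hkn | hkn
    · simpa [Nat.le_of_lt hkn, Nat.succ_le_of_lt hkn] using hstep k hkn
    · have hk' : k = n := by omega
      subst hk'
      simpa [hn] using hbc

private lemma exists_injChain {r : V → V → Prop} {i j : V}
    (h : Relation.ReflTransGen r i j) :
    ∃ n, ∃ f : ℕ → V, f 0 = i ∧ f n = j ∧ (∀ k, k < n → r (f k) (f (k+1))) ∧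
      ∀ a, a ≤ n → ∀ b, b ≤ n → f a = f b → a = b := by
  classical
  have hex : ∃ n, ∃ f : ℕ → V, f 0 = i ∧ f n = j ∧ ∀ k, k < n → r (f k) (f (k+1)) :=
    chain_of_reflTransGen h
  obtain ⟨f, h0, hn, hstep⟩ := Nat.find_spec hex
  refine ⟨Nat.find hex, f, h0, hn, hstep, ?_⟩
  set n := Nat.find hex with hndef
  have key : ∀ a b, a < b → b ≤ n → f a = f b → False := by
    intro a b hab hbn hfab
    set m := n - (b - a) with hm
    have hmn : m < n := by omega
    apply Nat.find_min hex hmn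
    refine ⟨fun k => if k ≤ a then f k else f (k + b - a), by simp [h0], ?_, ?_⟩
    · by_cases hma : m ≤ a
      · have hma' : m = a ∧ b = n := by omega
        beta_reduce
        rw [if_pos hma, hma'.1, hfab, hma'.2, hn]
      · have : m + b - a = n := by omega
        simp only [if_neg hma, this, hn]
    · intro k hk
      by_cases hk1 : k + 1 ≤ a
      · have hka : k ≤ a := by omega
        simp only [if_pos hk1, if_pos hka]
        exact hstep k (by omega)
      · by_cases hka : k ≤ a
        · have hkeq : k = a := by omega
          have hbn' : b < n := by omega
          have h1 : k + 1 + b - a = b + 1 := by omega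
          beta_reduce
          rw [if_pos hka, if_neg hk1, h1, hkeq, hfab]
          exact hstep b hbn'
        · have h1 : k + 1 + b - a = (k + b - a) + 1 := by omega
          simp only [if_neg hka, if_neg hk1, h1]
          exact hstep (k + b - a) (by omega)
  intro a ha b hb hfab
  by_contra hne
  rcases Nat.lt_or_ge a b with hlt | hge
  · exact key a b hlt hb hfab
  · exact key b a (by omega) ha hfab.symm

private lemma inducingPath_of_dir {G : DMG V} {a b : V} (hd : G.dir a b) (hab : a ≠ b) :
    G.InducingPath a b := by
  refine ⟨⟨1, fun m => if m = 0 then a else b, fun _ => false, fun _ => true⟩,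
    ?_, ?_, ?_, ?_, ?_⟩
  · intro k hk
    have hk' : k < 1 := hk
    have : k = 0 := by omega
    subst this
    exact Or.inl ⟨rfl, rfl, by simpa using hd⟩
  · simp [Walk.first]
  · simp [Walk.last]
  · intro x hx y hy hxy
    have hx' : x ≤ 1 := hx
    have hy' : y ≤ 1 := hy
    interval_cases x <;> interval_cases y <;> simp_all
  · constructor
    · intro k hk
      have h1 : 0 < k := hk.1.1
      have h2 : k < 1 := hk.1.2
      omega
    · intro k hk
      have h1 : 0 < k := hk.1.1
      have h2 : k < 1 := hk.1.2
      omega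

/-- if `i → j` in `P` and there is no possibly directed path from
`i` to `j` in `P` avoiding the edge `i → j`, then the directed edge `i → j` is
present in any DMG `G` contained in `P`. -/
theorem statement12 (P : DPAG V) (G : DMG V) (hPG : P.Contains G)
    (i j : V) (hij : i ≠ j) (hEdge : P.DirEdge i j)
    (h : ¬ ∃ n, ∃ p : ℕ → V, p 0 = i ∧ p n = j ∧ P.PossiblyDirectedPathOn n p ∧
        ∀ m, m < n → ¬ ((p m = i ∧ p (m+1) = j) ∨ (p m = j ∧ p (m+1) = i))) :
    G.dir i j := by
  have hAnc : G.Anc i j := hPG.2.2 i j hEdge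
  obtain ⟨n, f, h0, hn, hstep, hinj⟩ := exists_injChain hAnc
  have hn0 : 0 < n := by
    rcases Nat.eq_zero_or_pos n with h' | h'
    · exact absurd (h0.symm.trans (h' ▸ hn)) hij
    · exact h'
  -- each step gives a P-edge with no arrowhead at the near end
  have hedge : ∀ k, k < n → P.adj (f k) (f (k+1)) ∧ P.mark (f (k+1)) (f k) ≠ Mark.arrow := by
    intro k hk
    have hne : f k ≠ f (k+1) := fun he => by
      have := hinj k (by omega) (k+1) (by omega) he; omega
    have hAdj : P.adj (f k) (f (k+1)) :=
      (hPG.1 (f k) (f (k+1)) hne).2 (inducingPath_of_dir (hstep k hk) hne)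
    have hAnc' : G.Anc (f k) (f (k+1)) := Relation.ReflTransGen.single (hstep k hk)
    have hNA : ¬ P.ArrowAt (f (k+1)) (f k) := fun hA => hPG.2.1 _ _ hA hAnc'
    refine ⟨hAdj, fun hm => hNA ⟨P.adj_symm _ _ hAdj, hm⟩⟩
  have hPD : P.PossiblyDirectedPathOn n f := ⟨hedge, hinj⟩
  -- the path must use the edge i → j
  have hm : ∃ m, m < n ∧ ((f m = i ∧ f (m+1) = j) ∨ (f m = j ∧ f (m+1) = i)) := by
    by_contra hcon
    push_neg at hcon
    exact h ⟨n, f, h0, hn, hPD, fun m hm' => by have := hcon m hm'; tauto⟩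
  obtain ⟨m, hmn, hor⟩ := hm
  rcases hor with ⟨hmi, hmj⟩ | ⟨hmj, hmi⟩
  · have hm0 : m = 0 := hinj m (by omega) 0 (by omega) (hmi.trans h0.symm)
    have hmn1 : m + 1 = n := hinj (m+1) (by omega) n le_rfl (hmj.trans hn.symm)
    have := hstep m hmn
    rwa [hmi, hmj] at this
  · have : m = n := hinj m (by omega) n le_rfl (hmj.trans hn.symm)
    omega

end CausalGraphs
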